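/- Given the noise-free two-element system Θ_α + 2πN_α = k(z + y_α²/(2z)), Θ_β + 2πN_β = k(z + y_β²/(2z)) with N_β − N_α = 0 when Θ_β > Θ_α and N_β − N_α = 1 when Θ_β ≤ Θ_α, the unknown z > 0 is uniquely recovered as z = k(y_β² − y_α²)/(2(Θ_β − Θ_α)) if Θ_β > Θ_α, and z = k(y_β² − y_α²)/(2(Θ_β − Θ_α + 2π)) if Θ_β ≤ Θ_α. -/

import Mathlib

/-!
Subtracting the two phase equations cancels the common term `k z`, leaving
`Θβ - Θα + 2π (Nβ - Nα) = k (yβ² - yα²) / (2z)`. The prescribed jump `Nβ - Nα` turns the left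
side into `Θβ - Θα` or `Θβ - Θα + 2π`, which is nonzero in either case, so this equation can be
solved for `z`.
-/

/-- Fresnel approximation of the propagation phase `k √(z² + y²)`. -/
noncomputable def fresnelPhase (k z y : ℝ) : ℝ :=
  k * (z + y ^ 2 / (2 * z))

lemma fresnelPhase_sub_fresnelPhase {z : ℝ} (hz : z ≠ 0) (k yα yβ : ℝ) :
    fresnelPhase k z yβ - fresnelPhase k z yα = k * (yβ ^ 2 - yα ^ 2) / (2 * z) := by
  unfold fresnelPhase
  field_simp
  ring

lemma eq_div_two_mul_of_eq_div_two_mul {z d c : ℝ} (hz : z ≠ 0) (hd : d ≠ 0)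
    (h : d = c / (2 * z)) : z = c / (2 * d) := by
  rw [eq_div_iff (by positivity)] at h
  rw [eq_div_iff (mul_ne_zero two_ne_zero hd), ← h]
  ring

theorem position_recovery_from_phases_general (yα yβ k z : ℝ) (Θα Θβ : ℝ) (Nα Nβ : ℤ)
    (hz : 0 < z)
    (hΘα : Θα ∈ Set.Ico 0 (2 * Real.pi)) (hΘβ : Θβ ∈ Set.Ico 0 (2 * Real.pi))
    (hα : Θα + 2 * Real.pi * Nα = k * (z + yα ^ 2 / (2 * z)))
    (hβ : Θβ + 2 * Real.pi * Nβ = k * (z + yβ ^ 2 / (2 * z)))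
    (hN0 : Θβ > Θα → Nβ - Nα = 0) (hN1 : Θβ ≤ Θα → Nβ - Nα = 1) :
    (Θβ > Θα → z = k * (yβ ^ 2 - yα ^ 2) / (2 * (Θβ - Θα))) ∧
    (Θβ ≤ Θα → z = k * (yβ ^ 2 - yα ^ 2) / (2 * (Θβ - Θα + 2 * Real.pi))) := by
  have hdiff : Θβ - Θα + 2 * Real.pi * ((Nβ - Nα : ℤ) : ℝ)
      = k * (yβ ^ 2 - yα ^ 2) / (2 * z) := by
    rw [← fresnelPhase_sub_fresnelPhase hz.ne', fresnelPhase, fresnelPhase, ← hα, ← hβ]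
    push_cast
    ring
  constructor
  · intro hlt
    rw [hN0 hlt] at hdiff
    exact eq_div_two_mul_of_eq_div_two_mul hz.ne' (sub_ne_zero.2 hlt.ne') (by simpa using hdiff)
  · intro hle
    rw [hN1 hle] at hdiff
    have hpos : 0 < Θβ - Θα + 2 * Real.pi := by linarith [hΘα.2, hΘβ.1]
    exact eq_div_two_mul_of_eq_div_two_mul hz.ne' hpos.ne' (by simpa using hdiff)

theorem position_recovery_from_phases (yα yβ k z : ℝ) (Θα Θβ : ℝ) (Nα Nβ : ℤ)
    (hy : yα < yβ) (hk : 0 < k) (hz : 0 < z)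
    (hΘα : Θα ∈ Set.Ico 0 (2 * Real.pi)) (hΘβ : Θβ ∈ Set.Ico 0 (2 * Real.pi))
    (hα : Θα + 2 * Real.pi * Nα = k * (z + yα ^ 2 / (2 * z)))
    (hβ : Θβ + 2 * Real.pi * Nβ = k * (z + yβ ^ 2 / (2 * z)))
    (hN0 : Θβ > Θα → Nβ - Nα = 0) (hN1 : Θβ ≤ Θα → Nβ - Nα = 1) :
    (Θβ > Θα → z = k * (yβ ^ 2 - yα ^ 2) / (2 * (Θβ - Θα))) ∧
    (Θβ ≤ Θα → z = k * (yβ ^ 2 - yα ^ 2) / (2 * (Θβ - Θα + 2 * Real.pi))) :=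
  position_recovery_from_phases_general yα yβ k z Θα Θβ Nα Nβ hz hΘα hΘβ hα hβ hN0 hN1
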